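/- arXiv:1502.02643 — 3 statements merged into one kernel-verified Lean document; each statement's English description precedes it below -/
import Mathlib

section
/- Let y ∈ 𝒴, let y* be an optimal solution of (Prox-DSM) closest to y, and let g* be the optimal value of (Prox-DSM). Then ⟨∇g(y), y* − y⟩ ≤ −(2/(n²r + 1)) ( g(y) − g* + ‖y − y*‖² ). -/
open scoped RealInnerProductSpace Pointwise

noncomputable section

/-- A set function on the ground set `V = {1,…,n}` (modeled as `Fin n`) is submodular if
`F(A ∩ B) + F(A ∪ B) ≤ F(A) + F(B)` for all `A, B ⊆ V`. -/
def Submodular {n : ℕ} (F : Finset (Fin n) → ℝ) : Prop :=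
  ∀ A B : Finset (Fin n), F (A ∩ B) + F (A ∪ B) ≤ F A + F B

/-- The base polytope `B(F) = {w ∈ ℝⁿ | ∀ A ⊆ V, w(A) ≤ F(A), and w(V) = F(V)}`. -/
def basePolytope (n : ℕ) (F : Finset (Fin n) → ℝ) : Set (EuclideanSpace ℝ (Fin n)) :=
  {w | (∀ A : Finset (Fin n), ∑ i ∈ A, w i ≤ F A) ∧ (∑ i, w i = F Finset.univ)}

/-- `ℝ^{nr}` with the Euclidean norm, written in `r` blocks of `n` coordinates. -/
abbrev Vec (n r : ℕ) := PiLp 2 (fun _ : Fin r => EuclideanSpace ℝ (Fin n))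

/-- The feasible set `𝒴 = ∏ᵢ B(Fᵢ)` of (Prox-DSM). -/
def feas (n r : ℕ) (F : Fin r → Finset (Fin n) → ℝ) : Set (Vec n r) :=
  {y | ∀ i, y i ∈ basePolytope n (F i)}

/-- The objective `g(y) = ‖∑ᵢ y⁽ⁱ⁾‖²` of (Prox-DSM). -/
def g (n r : ℕ) (y : Vec n r) : ℝ := ‖∑ i, y i‖ ^ 2

/-- The `i`-th block of the gradient of `g`: `∇ᵢ g(y) = 2 ∑ⱼ y⁽ʲ⁾` (the same for every `i`). -/
def gradBlock (n r : ℕ) (y : Vec n r) : EuclideanSpace ℝ (Fin n) := (2 : ℝ) • ∑ j, y j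

/-- The full gradient `∇g(y) ∈ ℝ^{nr}`, whose every block equals `2 ∑ⱼ y⁽ʲ⁾`. -/
def gradg (n r : ℕ) (y : Vec n r) : Vec n r := WithLp.toLp 2 (fun _ => gradBlock n r y)

/-- `y` is an optimal solution of (Prox-DSM). -/
def IsOptimal (n r : ℕ) (F : Fin r → Finset (Fin n) → ℝ) (y : Vec n r) : Prop :=
  y ∈ feas n r F ∧ ∀ z ∈ feas n r F, g n r y ≤ g n r z

/-- The linear map `S = (1/√r)[Iₙ Iₙ ⋯ Iₙ]`, i.e. `S y = (1/√r) ∑ᵢ y⁽ⁱ⁾`. -/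
def Smap (n r : ℕ) (y : Vec n r) : EuclideanSpace ℝ (Fin n) := (Real.sqrt r)⁻¹ • ∑ i, y i

/-- Distance between two sets: `d(K₁, K₂) = inf{‖k₁ - k₂‖ : k₁ ∈ K₁, k₂ ∈ K₂}`. -/
def setDist {E : Type*} [PseudoMetricSpace E] (A B : Set E) : ℝ :=
  sInf ((fun p : E × E => dist p.1 p.2) '' (A ×ˢ B))

/-!
With `s = ∑ᵢ y⁽ⁱ⁾` and `s* = ∑ᵢ y*⁽ⁱ⁾` we have `⟨∇g(y), y* - y⟩ = g* - g(y) - ‖s - s*‖²`, so the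
claim follows from two estimates.

* `s*` is the point of least norm of the convex set `{∑ᵢ z⁽ⁱ⁾ : z ∈ 𝒴}`, hence
  `‖s - s*‖² ≤ g(y) - g*`.
* `y` can be moved to some `x ∈ 𝒴` with `∑ᵢ x⁽ⁱ⁾ = s*` (so `x` is optimal) moving every
  coordinate by at most `‖s - s*‖₁ / 2`. While the block sums differ, submodularity provides a
  path of exchange arcs from a coordinate where the current block sum is too large to one where
  it is too small; shifting `δ` units of mass along it lowers the `ℓ¹` discrepancy by `2δ` and
  moves each coordinate by at most `δ`. Compactness turns these steps into the point `x`.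

Hence `‖y - y*‖² ≤ ‖y - x‖² ≤ n r ‖s - s*‖₁² / 4 ≤ n² r ‖s - s*‖²`, and the two estimates
combine to the bound with constant `2 / (n² r + 1)`.
-/

open Finset

theorem exists_pos_le_of_pos {ι : Type*} [Finite ι] (f : ι → ℝ) :
    ∃ σ > 0, ∀ i, 0 < f i → σ ≤ f i := by
  rcases isEmpty_or_nonempty {i // 0 < f i} with h | h
  · exact ⟨1, one_pos, fun i hi => (h.false ⟨i, hi⟩).elim⟩
  · obtain ⟨i₀, hi₀⟩ := Finite.exists_min fun i : {i // 0 < f i} => f i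
    exact ⟨f i₀, i₀.2, fun i hi => hi₀ ⟨i, hi⟩⟩

theorem sum_abs_add_smul_single_sub_single {ι : Type*} [Fintype ι] [DecidableEq ι]
    {d : ι → ℝ} {u v : ι} {δ : ℝ} (huv : u ≠ v) (hδ : 0 ≤ δ) (hu : δ ≤ d u) (hv : δ ≤ -d v) :
    ∑ w, |d w + δ * ((if w = v then 1 else 0) - if w = u then 1 else 0)| =
      ∑ w, |d w| - 2 * δ := by
  have hterm : ∀ w, |d w + δ * ((if w = v then 1 else 0) - if w = u then 1 else 0)| =
      |d w| - δ * ((if w = u then 1 else 0) + if w = v then 1 else 0) := by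
    intro w
    rcases eq_or_ne w u with rfl | hwu
    · simp only [if_neg huv, if_true]
      rw [abs_of_nonneg (by linarith), abs_of_nonneg (by linarith)]
      ring
    rcases eq_or_ne w v with rfl | hwv
    · simp only [if_neg hwu, if_true]
      rw [abs_of_nonpos (by linarith), abs_of_nonpos (by linarith)]
      ring
    · simp [hwu, hwv]
  simp only [hterm, mul_add, sum_sub_distrib, sum_add_distrib, mul_ite, mul_one, mul_zero,
    sum_ite_eq', mem_univ, if_true]
  ring

theorem List.exists_isChain_cons_nodup_of_reflTransGen {α : Type*} {R : α → α → Prop} {a b : α}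
    (h : Relation.ReflTransGen R a b) :
    ∃ l, IsChain R (a :: l) ∧ (a :: l).getLast (cons_ne_nil a l) = b ∧ (a :: l).Nodup := by
  classical
  induction h using Relation.ReflTransGen.head_induction_on with
  | refl => exact ⟨[], .singleton _, rfl, nodup_singleton b⟩
  | @head a c hac _ ih =>
    obtain ⟨l, hchain, hlast, hnodup⟩ := ih
    by_cases ha : a ∈ c :: l
    · -- `a` already occurs on the path: keep only the part after that occurrence
      obtain ⟨s, t, hst⟩ := append_of_mem ha
      have hsuffix : a :: t <:+ c :: l := ⟨s, hst.symm⟩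
      refine ⟨t, hchain.suffix hsuffix, ?_, hnodup.sublist hsuffix.sublist⟩
      rw [← hlast]
      simp only [hst, getLast_append_of_ne_nil _ (cons_ne_nil a t)]
    · exact ⟨c :: l, isChain_cons_cons.2 ⟨hac, hchain⟩, by rwa [getLast_cons_cons],
        nodup_cons.2 ⟨ha, hnodup⟩⟩

section TightSets

variable {n : ℕ} {F : Finset (Fin n) → ℝ} {x : EuclideanSpace ℝ (Fin n)}

def IsTight (F : Finset (Fin n) → ℝ) (x : EuclideanSpace ℝ (Fin n)) (A : Finset (Fin n)) : Prop :=
  ∑ w ∈ A, x w = F A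

/-- For small `ε > 0` the point `x + ε (e_b - e_a)` stays in the base polytope. -/
def IsExchangeArc (F : Finset (Fin n) → ℝ) (x : EuclideanSpace ℝ (Fin n)) (a b : Fin n) : Prop :=
  ∀ A, b ∈ A → a ∉ A → ¬IsTight F x A

theorem isTight_inter_and_union (hF : Submodular F) (hx : x ∈ basePolytope n F)
    {A B : Finset (Fin n)} (hA : IsTight F x A) (hB : IsTight F x B) :
    IsTight F x (A ∩ B) ∧ IsTight F x (A ∪ B) := by
  have hinter := hx.1 (A ∩ B)
  have hunion := hx.1 (A ∪ B)
  have hmod : ∑ w ∈ A ∪ B, x w + ∑ w ∈ A ∩ B, x w = ∑ w ∈ A, x w + ∑ w ∈ B, x w :=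
    sum_union_inter
  unfold IsTight at *
  constructor <;> linarith [hF A B]

theorem isTight_inf (hF : Submodular F) (hx : x ∈ basePolytope n F) {ι : Type*}
    {s : Finset ι} {f : ι → Finset (Fin n)} (h : ∀ a ∈ s, IsTight F x (f a)) :
    IsTight F x (s.inf f) :=
  inf_induction hx.2 (fun _ hA _ hB => (isTight_inter_and_union hF hx hA hB).1) h

theorem isTight_sup' (hF : Submodular F) (hx : x ∈ basePolytope n F) {ι : Type*}
    {s : Finset ι} (hs : s.Nonempty) {f : ι → Finset (Fin n)}
    (h : ∀ a ∈ s, IsTight F x (f a)) : IsTight F x (s.sup' hs f) :=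
  sup'_induction hs f (fun _ hA _ hB => (isTight_inter_and_union hF hx hA hB).2) h

/-- A nonempty set that no exchange arc enters is tight: it is the union over `b ∈ Q` of the
intersections of tight sets separating `b` from the points outside `Q`. -/
theorem isTight_of_forall_not_isExchangeArc (hF : Submodular F) (hx : x ∈ basePolytope n F)
    {Q : Finset (Fin n)} (hQ : Q.Nonempty) (h : ∀ a ∉ Q, ∀ b ∈ Q, ¬IsExchangeArc F x a b) :
    IsTight F x Q := by
  classical
  have hsep : ∀ b a, ∃ A, (a ∉ Q → b ∈ Q → IsTight F x A ∧ b ∈ A ∧ a ∉ A) := by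
    intro b a
    by_cases hab : a ∉ Q ∧ b ∈ Q
    · obtain ⟨A, hbA, haA, hA⟩ : ∃ A, b ∈ A ∧ a ∉ A ∧ IsTight F x A := by
        simpa [IsExchangeArc] using h a hab.1 b hab.2
      exact ⟨A, fun _ _ => ⟨hA, hbA, haA⟩⟩
    · exact ⟨∅, fun ha hb => absurd ⟨ha, hb⟩ hab⟩
  choose A hA using hsep
  have hQ_eq : Q = Q.sup' hQ fun b => Qᶜ.inf (A b) := by
    apply le_antisymm
    · intro b hb
      exact (mem_sup' hQ).2 ⟨b, hb, mem_inf.2 fun a ha => (hA b a (mem_compl.1 ha) hb).2.1⟩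
    · refine sup'_le hQ _ fun b hb c hc => ?_
      by_contra hcQ
      exact (hA b c hcQ hb).2.2 (mem_inf.1 hc c (mem_compl.2 hcQ))
  rw [hQ_eq]
  exact isTight_sup' hF hx hQ fun b hb =>
    isTight_inf hF hx fun a ha => (hA b a (mem_compl.1 ha) hb).1

end TightSets

section PathShift

variable {n r : ℕ}

/-- Every arc `a → b` of the path `l` moves one unit of mass from `a` to `b` in block `β a b`. -/
def pathShift (β : Fin n → Fin n → Fin r) : List (Fin n) → Fin r → Fin n → ℝ
  | a :: b :: l, i, w =>
      (if β a b = i then (if w = b then 1 else 0) - (if w = a then 1 else 0) else 0) +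
        pathShift β (b :: l) i w
  | _, _, _ => 0

variable {β : Fin n → Fin n → Fin r}

theorem pathShift_of_notMem {l : List (Fin n)} {w : Fin n} (hw : w ∉ l) (i : Fin r) :
    pathShift β l i w = 0 := by
  match l, hw with
  | [], _ | [_], _ => rfl
  | a :: b :: l, hw =>
    simp only [List.mem_cons, not_or] at hw
    have ih : pathShift β (b :: l) i w = 0 := pathShift_of_notMem (by simp [hw.2.1, hw.2.2]) i
    simp [pathShift, hw.1, hw.2.1, ih]

theorem pathShift_head_mem_Icc {a : Fin n} {l : List (Fin n)} (hl : (a :: l).Nodup) (i : Fin r) :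
    pathShift β (a :: l) i a ∈ Set.Icc (-1) 0 := by
  match l, hl with
  | [], _ => simp [pathShift]
  | b :: l, hl =>
    have hab : a ≠ b := fun h => (List.nodup_cons.1 hl).1 (h ▸ List.mem_cons_self)
    simp only [pathShift, if_neg hab, pathShift_of_notMem (List.nodup_cons.1 hl).1 i]
    split_ifs <;> norm_num

/-- Along a path without repeated vertices each coordinate receives at most one unit of mass
and gives away at most one. -/
theorem abs_pathShift_le_one {l : List (Fin n)} (hl : l.Nodup) (i : Fin r) (w : Fin n) :
    |pathShift β l i w| ≤ 1 := by
  match l, hl with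
  | [], _ | [_], _ => simp [pathShift]
  | a :: b :: l, hl =>
    have ih := abs_pathShift_le_one hl.of_cons i w
    have hhead := pathShift_head_mem_Icc (β := β) hl.of_cons i
    have ha : pathShift β (b :: l) i a = 0 := pathShift_of_notMem (List.nodup_cons.1 hl).1 i
    have hab : a ≠ b := fun h => (List.nodup_cons.1 hl).1 (h ▸ List.mem_cons_self)
    simp only [pathShift]
    rw [abs_le] at ih ⊢
    rcases eq_or_ne w a with rfl | hwa
    · simp only [if_neg hab, ha]
      split_ifs <;> norm_num
    rcases eq_or_ne w b with rfl | hwb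
    · simp only [if_neg hwa]
      split_ifs <;> constructor <;> linarith [hhead.1, hhead.2]
    · simp only [if_neg hwa, if_neg hwb, sub_self, ite_self, zero_add]
      exact ih

theorem sum_pathShift_blocks {a b : Fin n} {l : List (Fin n)}
    (hb : (a :: l).getLast (List.cons_ne_nil a l) = b) (w : Fin n) :
    ∑ i, pathShift β (a :: l) i w = (if w = b then 1 else 0) - if w = a then 1 else 0 := by
  induction l generalizing a with
  | nil => simp [pathShift, ← hb]
  | cons c l ih =>
    rw [List.getLast_cons_cons] at hb
    simp only [pathShift, sum_add_distrib, ih hb, sum_ite_eq, mem_univ, if_true]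
    ring

theorem sum_pathShift_univ (l : List (Fin n)) (i : Fin r) : ∑ w, pathShift β l i w = 0 := by
  match l with
  | [] | [_] => simp [pathShift]
  | a :: b :: l =>
    simp only [pathShift, sum_add_distrib, sum_pathShift_univ (b :: l) i]
    split_ifs <;> simp

theorem sum_pathShift_nonpos {F : Fin r → Finset (Fin n) → ℝ} {x : Fin r → EuclideanSpace ℝ (Fin n)}
    {l : List (Fin n)} (hl : l.IsChain fun a b => IsExchangeArc (F (β a b)) (x (β a b)) a b)
    {i : Fin r} {A : Finset (Fin n)} (hA : IsTight (F i) (x i) A) :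
    ∑ w ∈ A, pathShift β l i w ≤ 0 := by
  match l, hl with
  | [], _ | [_], _ => simp [pathShift]
  | a :: b :: l, hl =>
    rw [List.isChain_cons_cons] at hl
    have ih := sum_pathShift_nonpos hl.2 hA
    simp only [pathShift, sum_add_distrib]
    split_ifs with hi
    · subst hi
      have hba : b ∈ A → a ∈ A := fun hb => by_contra fun ha => hl.1 A hb ha hA
      have : ((if b ∈ A then 1 else 0) - if a ∈ A then 1 else 0 : ℝ) ≤ 0 := by
        split_ifs <;> simp_all
      rw [sum_sub_distrib, sum_ite_eq', sum_ite_eq']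
      linarith
    · simpa using ih

end PathShift

section Augmentation

variable {n r : ℕ} {F : Fin r → Finset (Fin n) → ℝ}

theorem sum_sum_sub_eq_zero {x z : Vec n r} (hx : x ∈ feas n r F) (hz : z ∈ feas n r F) :
    ∑ w, (∑ i, x i w - ∑ i, z i w) = 0 := by
  rw [sum_sub_distrib, sum_comm, sum_comm (f := fun w i => z i w)]
  simp [fun i => (hx i).2, fun i => (hz i).2]

theorem exists_reflTransGen_exchangeArc (hsub : ∀ i, Submodular (F i)) {x z : Vec n r}
    (hx : x ∈ feas n r F) (hz : z ∈ feas n r F) {v₀ : Fin n}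
    (hv₀ : ∑ i, x i v₀ < ∑ i, z i v₀) :
    ∃ u v, ∑ i, z i u < ∑ i, x i u ∧ ∑ i, x i v < ∑ i, z i v ∧
      Relation.ReflTransGen (fun a b => ∃ i, IsExchangeArc (F i) (x i) a b) u v := by
  classical
  by_contra! hcon
  -- The coordinates `Q` not reachable from above are tight in every block, which forces
  -- `∑ᵢ zᵢ(Q) ≤ ∑ᵢ xᵢ(Q)`, although `∑ᵢ xᵢ ≤ ∑ᵢ zᵢ` on `Q`, strictly at `v₀`.
  set Reach : Fin n → Prop := fun b => ∃ u, ∑ i, z i u < ∑ i, x i u ∧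
    Relation.ReflTransGen (fun a b => ∃ i, IsExchangeArc (F i) (x i) a b) u b
  set Q := univ.filter fun w => ¬Reach w
  have hv₀Q : v₀ ∈ Q := by
    simpa [Q, Reach] using fun u hu => hcon u v₀ hu hv₀
  have hQ : ∀ i, IsTight (F i) (x i) Q := fun i =>
    isTight_of_forall_not_isExchangeArc (hsub i) (hx i) ⟨v₀, hv₀Q⟩ fun a ha b hb harc => by
      obtain ⟨u, hu, hua⟩ : Reach a := by simpa [Q] using ha
      exact (mem_filter.1 hb).2 ⟨u, hu, hua.tail ⟨i, harc⟩⟩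
  have hnonneg : 0 ≤ ∑ w ∈ Q, (∑ i, x i w - ∑ i, z i w) := by
    rw [sum_sub_distrib, sum_comm, sum_comm (f := fun w i => z i w), sub_nonneg]
    exact sum_le_sum fun i _ => (hQ i).symm ▸ (hz i).1 Q
  have hneg : ∑ w ∈ Q, (∑ i, x i w - ∑ i, z i w) < 0 := by
    refine sum_neg' (fun w hw => sub_nonpos.2 (not_lt.1 fun hw' => ?_))
      ⟨v₀, hv₀Q, sub_neg.2 hv₀⟩
    exact (mem_filter.1 hw).2 ⟨w, hw', .refl⟩
  exact hneg.not_ge hnonneg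

def shiftAlong (x : Vec n r) (δ : ℝ) (β : Fin n → Fin n → Fin r) (l : List (Fin n)) : Vec n r :=
  WithLp.toLp 2 fun i => WithLp.toLp 2 fun w => x i w + δ * pathShift β l i w

theorem sum_shiftAlong_apply (x : Vec n r) (δ : ℝ) (β : Fin n → Fin n → Fin r)
    (l : List (Fin n)) (i : Fin r) (A : Finset (Fin n)) :
    ∑ w ∈ A, shiftAlong x δ β l i w = ∑ w ∈ A, x i w + δ * ∑ w ∈ A, pathShift β l i w := by
  simp [shiftAlong, sum_add_distrib, mul_sum]

/-- On tight sets the exchange arcs keep the constraints; on the others the slack absorbs the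
shift, which moves each coordinate by at most `δ`. -/
theorem shiftAlong_mem_feas {x : Vec n r} (hx : x ∈ feas n r F) {β : Fin n → Fin n → Fin r}
    {l : List (Fin n)} (hl : l.IsChain fun a b => IsExchangeArc (F (β a b)) (x (β a b)) a b)
    (hnd : l.Nodup) {δ : ℝ} (hδ : 0 ≤ δ)
    (hslack : ∀ i A, ∑ w ∈ A, x i w < F i A → ∑ w ∈ A, x i w + n * δ ≤ F i A) :
    shiftAlong x δ β l ∈ feas n r F := by
  intro i
  refine ⟨fun A => ?_, ?_⟩
  · rw [sum_shiftAlong_apply]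
    by_cases hA : IsTight (F i) (x i) A
    · have := mul_nonpos_of_nonneg_of_nonpos hδ (sum_pathShift_nonpos (β := β) hl hA)
      rw [IsTight] at hA
      linarith
    · have hsum : ∑ w ∈ A, pathShift β l i w ≤ n :=
        calc ∑ w ∈ A, pathShift β l i w ≤ ∑ w ∈ A, (1 : ℝ) :=
              sum_le_sum fun w _ => (abs_le.1 (abs_pathShift_le_one hnd i w)).2
          _ = A.card := by simp
          _ ≤ n := by exact_mod_cast (card_le_univ A).trans_eq (Fintype.card_fin n)
      have := hslack i A (lt_of_le_of_ne ((hx i).1 A) hA)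
      nlinarith
  · rw [sum_shiftAlong_apply, sum_pathShift_univ, mul_zero, add_zero]
    exact (hx i).2

def discrepancy (x z : Vec n r) : ℝ := ∑ w, |∑ i, x i w - ∑ i, z i w|

theorem exists_mem_feas_discrepancy_lt (hsub : ∀ i, Submodular (F i)) {x z : Vec n r}
    (hx : x ∈ feas n r F) (hz : z ∈ feas n r F) (hne : ∃ w, ∑ i, x i w ≠ ∑ i, z i w) :
    ∃ x' ∈ feas n r F, discrepancy x' z < discrepancy x z ∧
      ∀ i w, |x' i w - x i w| ≤ (discrepancy x z - discrepancy x' z) / 2 := by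
  classical
  obtain ⟨v₀, hv₀⟩ : ∃ v₀, ∑ i, x i v₀ < ∑ i, z i v₀ := by
    by_contra! h
    obtain ⟨w, hw⟩ := hne
    exact hw <| sub_eq_zero.1 <| (sum_eq_zero_iff_of_nonneg fun w _ => sub_nonneg.2 (h w)).1
      (sum_sum_sub_eq_zero hx hz) w (mem_univ w)
  obtain ⟨u, v, hu, hv, huv⟩ := exists_reflTransGen_exchangeArc hsub hx hz hv₀
  obtain ⟨l, hchain, hlast, hnd⟩ := List.exists_isChain_cons_nodup_of_reflTransGen huv
  obtain ⟨i₀⟩ : Nonempty (Fin r) := by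
    by_contra! h
    simp at hu
  let β a b := if h : ∃ i, IsExchangeArc (F i) (x i) a b then h.choose else i₀
  have hβ : (u :: l).IsChain fun a b => IsExchangeArc (F (β a b)) (x (β a b)) a b :=
    hchain.imp fun a b h => by simpa only [β, dif_pos h] using h.choose_spec
  obtain ⟨σ, hσ, hslack⟩ :=
    exists_pos_le_of_pos fun p : Fin r × Finset (Fin n) => F p.1 p.2 - ∑ w ∈ p.2, x p.1 w
  have hn : (0 : ℝ) < n := by exact_mod_cast Fin.pos u
  -- `δ ≤ σ / n` keeps the non-tight constraints; the other two bounds make both ends of the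
  -- path lose exactly `δ` of discrepancy.
  set δ := min (σ / n) (min (∑ i, x i u - ∑ i, z i u) (∑ i, z i v - ∑ i, x i v))
  have hδ : 0 < δ := lt_min (div_pos hσ hn) (lt_min (sub_pos.2 hu) (sub_pos.2 hv))
  have hδu : δ ≤ ∑ i, x i u - ∑ i, z i u := (min_le_right _ _).trans (min_le_left _ _)
  have hδv : δ ≤ ∑ i, z i v - ∑ i, x i v := (min_le_right _ _).trans (min_le_right _ _)
  have huv' : u ≠ v := by rintro rfl; linarith
  have hsum : ∀ w, ∑ i, shiftAlong x δ β (u :: l) i w - ∑ i, z i w =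
      (∑ i, x i w - ∑ i, z i w) + δ * ((if w = v then 1 else 0) - if w = u then 1 else 0) := by
    intro w
    simp only [shiftAlong, PiLp.toLp_apply, sum_add_distrib, ← mul_sum, sum_pathShift_blocks hlast]
    ring
  have hdisc : discrepancy (shiftAlong x δ β (u :: l)) z = discrepancy x z - 2 * δ := by
    simp only [discrepancy, hsum]
    exact sum_abs_add_smul_single_sub_single huv' hδ.le hδu (by linarith)
  refine ⟨_, shiftAlong_mem_feas hx hβ hnd hδ.le fun i A hA => ?_, by linarith, fun i w => ?_⟩
  · have h1 := hslack (i, A) (sub_pos.2 hA)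
    have h2 : n * δ ≤ σ := by rw [mul_comm]; exact (le_div_iff₀ hn).1 (min_le_left _ _)
    dsimp only at h1
    linarith
  · rw [hdisc]
    simp only [shiftAlong, PiLp.toLp_apply, add_sub_cancel_left, abs_mul, abs_of_pos hδ]
    nlinarith [abs_pathShift_le_one (β := β) hnd i w]

theorem norm_sq_le_of_forall_abs_le (q : Vec n r) {M : ℝ} (h : ∀ i w, |q i w| ≤ M) :
    ‖q‖ ^ 2 ≤ n * r * M ^ 2 := by
  rw [PiLp.norm_sq_eq_of_L2]
  calc ∑ i, ‖q i‖ ^ 2 = ∑ i, ∑ w, |q i w| ^ 2 := by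
        simp only [EuclideanSpace.norm_sq_eq, Real.norm_eq_abs]
    _ ≤ ∑ _i : Fin r, ∑ _w : Fin n, M ^ 2 :=
        sum_le_sum fun i _ => sum_le_sum fun w _ => pow_le_pow_left₀ (abs_nonneg _) (h i w) 2
    _ = n * r * M ^ 2 := by simp; ring

theorem isClosed_basePolytope (n : ℕ) (F : Finset (Fin n) → ℝ) :
    IsClosed (basePolytope n F) := by
  simp only [basePolytope, Set.ofPred_and, Set.ofPred_forall]
  exact (isClosed_iInter fun A => isClosed_le (by fun_prop) continuous_const).inter
    (isClosed_eq (by fun_prop) continuous_const)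

theorem isClosed_feas : IsClosed (feas n r F) := by
  simp only [feas, Set.ofPred_forall]
  exact isClosed_iInter fun i => (isClosed_basePolytope n (F i)).preimage (by fun_prop)

theorem continuous_discrepancy (z : Vec n r) : Continuous fun x => discrepancy x z := by
  unfold discrepancy
  fun_prop

/-- Minimizing the discrepancy over the compact set of feasible points whose every coordinate
has moved from `y` by at most half the discrepancy already removed, the step lemma shows that
the minimum is `0`. -/
theorem exists_mem_feas_sum_eq (hsub : ∀ i, Submodular (F i)) {y z : Vec n r}
    (hy : y ∈ feas n r F) (hz : z ∈ feas n r F) :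
    ∃ x ∈ feas n r F, (∀ w, ∑ i, x i w = ∑ i, z i w) ∧
      ∀ i w, |x i w - y i w| ≤ discrepancy y z / 2 := by
  set K := {x | x ∈ feas n r F ∧ ∀ i w, |x i w - y i w| ≤ (discrepancy y z - discrepancy x z) / 2}
  have hyK : y ∈ K := ⟨hy, by simp⟩
  have hdisc_nonneg : ∀ x, 0 ≤ discrepancy x z := fun x => sum_nonneg fun w _ => abs_nonneg _
  have hKc : IsClosed K := by
    simp only [K, Set.ofPred_and, Set.ofPred_forall]
    exact isClosed_feas.inter <| isClosed_iInter fun i => isClosed_iInter fun w =>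
      isClosed_le (by fun_prop) (continuous_const.sub (continuous_discrepancy z) |>.div_const _)
  have hKb : Bornology.IsBounded K := by
    refine (Metric.isBounded_closedBall (x := y)
      (r := √(n * r * (discrepancy y z / 2) ^ 2))).subset fun x hx => ?_
    rw [Metric.mem_closedBall, dist_eq_norm, Real.le_sqrt (norm_nonneg _) (by positivity)]
    refine norm_sq_le_of_forall_abs_le _ fun i w => ?_
    simpa using (hx.2 i w).trans (by linarith [hdisc_nonneg x])
  obtain ⟨xh, hxhK, hmin⟩ := (Metric.isCompact_of_isClosed_isBounded hKc hKb).exists_isMinOn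
    ⟨y, hyK⟩ (continuous_discrepancy z).continuousOn
  have hsum : ∀ w, ∑ i, xh i w = ∑ i, z i w := by
    by_contra! hne
    obtain ⟨x', hx', hlt, hclose⟩ := exists_mem_feas_discrepancy_lt hsub hxhK.1 hz hne
    have hx'K : x' ∈ K := ⟨hx', fun i w => by
      linarith [abs_sub_le (x' i w) (xh i w) (y i w), hclose i w, hxhK.2 i w]⟩
    exact (hmin hx'K).not_gt hlt
  have hdisc : discrepancy xh z = 0 := by simp [discrepancy, hsum]
  exact ⟨xh, hxhK.1, hsum, fun i w => by simpa [hdisc] using hxhK.2 i w⟩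

end Augmentation

section Objective

theorem inner_sub_nonneg_of_forall_norm_le {E : Type*} [NormedAddCommGroup E]
    [InnerProductSpace ℝ E] {K : Set E} {a b : E} (hK : Convex ℝ K) (ha : a ∈ K) (hb : b ∈ K)
    (hmin : ∀ c ∈ K, ‖a‖ ≤ ‖c‖) : 0 ≤ ⟪a, b - a⟫ := by
  have hloc : IsLocalMinOn (fun c => ‖c‖ ^ 2) K a :=
    IsMinOn.localize fun c hc => pow_le_pow_left₀ (norm_nonneg _) (hmin c hc) 2
  have hseg : segment ℝ a (a + (b - a)) ⊆ K := by
    rw [add_sub_cancel]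
    exact hK.segment_subset ha hb
  simpa using hloc.hasFDerivWithinAt_nonneg
    (hasStrictFDerivAt_norm_sq a).hasFDerivAt.hasFDerivWithinAt
    (mem_posTangentConeAt_of_segment_subset hseg)

theorem norm_sub_sq_le_of_forall_norm_le {E : Type*} [NormedAddCommGroup E]
    [InnerProductSpace ℝ E] {K : Set E} {a b : E} (hK : Convex ℝ K) (ha : a ∈ K) (hb : b ∈ K)
    (hmin : ∀ c ∈ K, ‖a‖ ≤ ‖c‖) : ‖b - a‖ ^ 2 ≤ ‖b‖ ^ 2 - ‖a‖ ^ 2 := by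
  have h := inner_sub_nonneg_of_forall_norm_le hK ha hb hmin
  have hb' : ‖b‖ ^ 2 = ‖a‖ ^ 2 + 2 * ⟪a, b - a⟫ + ‖b - a‖ ^ 2 := by
    rw [← norm_add_sq_real, add_sub_cancel]
  linarith

variable {n r : ℕ} {F : Fin r → Finset (Fin n) → ℝ}

theorem convex_basePolytope (n : ℕ) (F : Finset (Fin n) → ℝ) :
    Convex ℝ (basePolytope n F) := by
  intro v hv w hw a b ha hb hab
  have hF : ∀ A, a * F A + b * F A = F A := fun A => by rw [← add_mul, hab, one_mul]
  simp only [basePolytope, Set.mem_ofPred_eq, PiLp.add_apply, PiLp.smul_apply, smul_eq_mul,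
    sum_add_distrib, ← mul_sum]
  refine ⟨fun A => ?_, by rw [hv.2, hw.2, hF]⟩
  linarith [hF A, mul_le_mul_of_nonneg_left (hv.1 A) ha, mul_le_mul_of_nonneg_left (hw.1 A) hb]

theorem convex_feas : Convex ℝ (feas n r F) :=
  fun _ hy _ hz _ _ ha hb hab i => convex_basePolytope n (F i) (hy i) (hz i) ha hb hab

theorem sq_sum_abs_le_card_mul_norm_sq (v : EuclideanSpace ℝ (Fin n)) :
    (∑ w, |v w|) ^ 2 ≤ n * ‖v‖ ^ 2 := by
  simpa [EuclideanSpace.norm_sq_eq] using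
    sq_sum_le_card_mul_sum_sq (s := univ) (f := fun w => |v w|)

theorem inner_gradg_sub (y y' : Vec n r) :
    ⟪gradg n r y, y' - y⟫ = g n r y' - g n r y - ‖∑ i, y i - ∑ i, y' i‖ ^ 2 := by
  have h : ⟪gradg n r y, y' - y⟫ = 2 * ⟪∑ i, y i, ∑ i, y' i - ∑ i, y i⟫ := by
    rw [PiLp.inner_apply]
    simp only [gradg, gradBlock, PiLp.toLp_apply, PiLp.sub_apply, real_inner_smul_left, ← mul_sum,
      ← inner_sum, sum_sub_distrib]
  rw [h, g, g, norm_sub_sq_real, inner_sub_right, real_inner_self_eq_norm_sq]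
  ring

theorem norm_sum_sub_sq_le_of_isOptimal {y ystar : Vec n r} (hy : y ∈ feas n r F)
    (hopt : IsOptimal n r F ystar) : ‖∑ i, y i - ∑ i, ystar i‖ ^ 2 ≤ g n r y - g n r ystar := by
  have hlin : IsLinearMap ℝ fun z : Vec n r => ∑ i, z i :=
    ⟨fun _ _ => by simp [sum_add_distrib], fun _ _ => by simp [smul_sum]⟩
  exact norm_sub_sq_le_of_forall_norm_le (convex_feas.is_linear_image hlin)
    ⟨ystar, hopt.1, rfl⟩ ⟨y, hy, rfl⟩ fun _ ⟨z, hz, hze⟩ =>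
      hze ▸ (pow_le_pow_iff_left₀ (norm_nonneg _) (norm_nonneg _) two_ne_zero).1 (hopt.2 z hz)

theorem exists_isOptimal_norm_sub_sq_le (hsub : ∀ i, Submodular (F i)) {y ystar : Vec n r}
    (hy : y ∈ feas n r F) (hopt : IsOptimal n r F ystar) :
    ∃ x, IsOptimal n r F x ∧ ‖y - x‖ ^ 2 ≤ n ^ 2 * r / 4 * ‖∑ i, y i - ∑ i, ystar i‖ ^ 2 := by
  obtain ⟨x, hx, hsum, hclose⟩ := exists_mem_feas_sum_eq hsub hy hopt.1
  have hsum' : ∑ i, x i = ∑ i, ystar i := by ext w; simpa using hsum w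
  refine ⟨x, ⟨hx, fun z hz => by simpa [g, hsum'] using hopt.2 z hz⟩, ?_⟩
  have hD : discrepancy y ystar ^ 2 ≤ n * ‖∑ i, y i - ∑ i, ystar i‖ ^ 2 := by
    simpa [discrepancy] using sq_sum_abs_le_card_mul_norm_sq (∑ i, y i - ∑ i, ystar i)
  calc ‖y - x‖ ^ 2 ≤ n * r * (discrepancy y ystar / 2) ^ 2 :=
        norm_sq_le_of_forall_abs_le _ fun i w => by simpa [abs_sub_comm] using hclose i w
    _ = n * r / 4 * discrepancy y ystar ^ 2 := by ring
    _ ≤ n * r / 4 * (n * ‖∑ i, y i - ∑ i, ystar i‖ ^ 2) := by gcongr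
    _ = n ^ 2 * r / 4 * ‖∑ i, y i - ∑ i, ystar i‖ ^ 2 := by ring

end Objective

theorem statement9_general (n r : ℕ) (hn : 1 ≤ n) (hr : 1 ≤ r)
    (F : Fin r → Finset (Fin n) → ℝ)
    (hsub : ∀ i, Submodular (F i))
    (y ystar : Vec n r) (hy : y ∈ feas n r F)
    (hopt : IsOptimal n r F ystar)
    (hclosest : ∀ z : Vec n r, IsOptimal n r F z → ‖y - ystar‖ ≤ ‖y - z‖) :
    ⟪gradg n r y, ystar - y⟫
      ≤ -(2 / ((n : ℝ) ^ 2 * r + 1)) * (g n r y - g n r ystar + ‖y - ystar‖ ^ 2) := by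
  set Q := ‖∑ i, y i - ∑ i, ystar i‖ ^ 2
  have hQ : Q ≤ g n r y - g n r ystar := norm_sum_sub_sq_le_of_isOptimal hy hopt
  obtain ⟨x, hxopt, hx⟩ := exists_isOptimal_norm_sub_sq_le hsub hy hopt
  have hdist : ‖y - ystar‖ ^ 2 ≤ ‖y - x‖ ^ 2 :=
    pow_le_pow_left₀ (norm_nonneg _) (hclosest x hxopt) 2
  have hN : (1 : ℝ) ≤ (n : ℝ) ^ 2 * r :=
    one_le_mul_of_one_le_of_one_le (one_le_pow₀ (by exact_mod_cast hn)) (by exact_mod_cast hr)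
  have hQ0 : 0 ≤ Q := by positivity
  rw [inner_gradg_sub, neg_mul, le_neg, div_mul_eq_mul_div, div_le_iff₀ (by linarith)]
  nlinarith [mul_nonneg (sub_nonneg.2 hN) (hQ0.trans hQ), mul_nonneg (zero_le_one.trans hN) hQ0]

/-- For `y ∈ 𝒴` and `y*` an optimal solution of (Prox-DSM) closest to `y`
(so `g(y*)` is the optimal value `g*`),
`⟨∇g(y), y* - y⟩ ≤ -(2/(n²r + 1)) (g(y) - g* + ‖y - y*‖²)`. -/
theorem statement9 (n r : ℕ) (hn : 1 ≤ n) (hr : 1 ≤ r)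
    (F : Fin r → Finset (Fin n) → ℝ)
    (hsub : ∀ i, Submodular (F i)) (hnorm : ∀ i, F i ∅ = 0)
    (y ystar : Vec n r) (hy : y ∈ feas n r F)
    (hopt : IsOptimal n r F ystar)
    (hclosest : ∀ z : Vec n r, IsOptimal n r F z → ‖y - ystar‖ ≤ ‖y - z‖) :
    ⟪gradg n r y, ystar - y⟫
      ≤ -(2 / ((n : ℝ) ^ 2 * r + 1)) * (g n r y - g n r ystar + ‖y - ystar‖ ^ 2) :=
  statement9_general n r hn hr F hsub y ystar hy hopt hclosest
end
end

section
/- Let g(y) = ‖Σ_{i=1}^r y^(i)‖² on ℝ^{nr} and let x, h ∈ ℝ^{nr}. For a subset R ⊆ {1,…,r}, let h_R ∈ ℝ^{nr} have blocks (h_R)^(i) = h^(i) for i ∈ R and (h_R)^(i) = 0 otherwise. Then Σ over all R ⊆ {1,…,r} of (1/r)^{|R|} (1 − 1/r)^{r − |R|} · g(x + h_R) ≤ g(x) + (1/r) ⟨∇g(x), h⟩ + (2/r) ‖h‖². (Equivalently: if R is a random subset including each index independently with probability 1/r, then 𝔼[g(x + h_R)] ≤ g(x) + (1/r)⟨∇g(x),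 h⟩ + (2/r)‖h‖².) -/
open scoped RealInnerProductSpace Pointwise

noncomputable section

/-- `h_R`: the vector whose block `i` is `h⁽ⁱ⁾` for `i ∈ R` and `0` otherwise. -/
def restrictBlocks (n r : ℕ) (R : Finset (Fin r)) (h : Vec n r) : Vec n r :=
  WithLp.toLp 2 (fun i => if i ∈ R then h i else 0)

/-!
If `R` contains each index independently with probability `p`, then `P(i ∈ R) = p` and
`P(i ∈ R ∧ j ∈ R) = p²` for `i ≠ j`, so expanding the square gives
`𝔼‖s + ∑_{i ∈ R} vᵢ‖² = ‖s‖² + 2p⟪s, ∑ vᵢ⟫ + p²‖∑ vᵢ‖² + p(1 - p) ∑ ‖vᵢ‖²`.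
For `p = 1/r`, the bound `‖∑ vᵢ‖² ≤ r ∑ ‖vᵢ‖²` makes the last two terms at most
`2p ∑ ‖vᵢ‖²`. Take `s = ∑ xᵢ` and `vᵢ = hᵢ`.
-/

open Finset

theorem norm_sum_sq_le_card_mul_sum_norm_sq {ι E : Type*} [SeminormedAddCommGroup E]
    (s : Finset ι) (v : ι → E) :
    ‖∑ i ∈ s, v i‖ ^ 2 ≤ #s * ∑ i ∈ s, ‖v i‖ ^ 2 :=
  (pow_le_pow_left₀ (norm_nonneg _) (norm_sum_le s v) 2).trans (sq_sum_le_card_mul_sum_sq ..)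

theorem norm_sum_sq_eq_sum_sum_inner {ι E : Type*} [NormedAddCommGroup E]
    [InnerProductSpace ℝ E] (s : Finset ι) (v : ι → E) :
    ‖∑ i ∈ s, v i‖ ^ 2 = ∑ i ∈ s, ∑ j ∈ s, ⟪v i, v j⟫ := by
  rw [← real_inner_self_eq_norm_sq, sum_inner]
  simp only [inner_sum]

section SubsetWeight

variable {ι : Type*} [Fintype ι] [DecidableEq ι]

/-- The probability that a random subset containing each element independently with
probability `p` equals `R`. -/
def subsetWeight (p : ℝ) (R : Finset ι) : ℝ := p ^ #R * (1 - p) ^ (Fintype.card ι - #R)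

theorem sum_subsetWeight_of_subset (p : ℝ) (T : Finset ι) :
    ∑ R, (if T ⊆ R then subsetWeight p R else 0) = p ^ #T := by
  -- expand `∏ i, (p + [i ∉ T] (1 - p)) = p ^ #T` over the subsets of `ι`
  have key := prod_add (fun _ => p) (fun i => if i ∉ T then 1 - p else 0) univ
  rw [powerset_univ] at key
  calc ∑ R, (if T ⊆ R then subsetWeight p R else 0)
      = ∑ R, (∏ _i ∈ R, p) * ∏ i ∈ univ \ R, (if i ∉ T then 1 - p else 0) := by
        refine sum_congr rfl fun R _ => ?_
        have hTR : (∀ i ∈ univ \ R, i ∉ T) ↔ T ⊆ R := by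
          simp only [mem_sdiff, mem_univ, true_and]
          exact ⟨fun h i hi => by_contra fun hiR => h i hiR hi, fun h i hiR hi => hiR (h hi)⟩
        rw [prod_ite_zero, prod_const, prod_const, card_univ_sdiff, subsetWeight]
        simp only [hTR, mul_ite, mul_zero]
    _ = ∏ i, (if i ∈ T then p else 1) := by
        rw [← key]
        refine prod_congr rfl fun i _ => ?_
        split_ifs <;> ring
    _ = p ^ #T := by rw [prod_ite_mem, univ_inter, prod_const]

theorem sum_subsetWeight (p : ℝ) : ∑ R : Finset ι, subsetWeight p R = 1 := by
  simpa using sum_subsetWeight_of_subset p (∅ : Finset ι)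

theorem sum_subsetWeight_of_mem (p : ℝ) (i : ι) :
    ∑ R, (if i ∈ R then subsetWeight p R else 0) = p := by
  simpa using sum_subsetWeight_of_subset p {i}

theorem sum_subsetWeight_of_mem_of_mem (p : ℝ) (i j : ι) :
    ∑ R, (if i ∈ R ∧ j ∈ R then subsetWeight p R else 0)
      = p ^ 2 + if i = j then p - p ^ 2 else 0 := by
  obtain rfl | hij := eq_or_ne i j
  · simpa using sum_subsetWeight_of_mem p i
  · simpa [insert_subset_iff, card_pair hij, hij] using sum_subsetWeight_of_subset p {i, j}

variable {E : Type*} [NormedAddCommGroup E] [InnerProductSpace ℝ E]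

theorem sum_subsetWeight_smul_sum (p : ℝ) (v : ι → E) :
    ∑ R, subsetWeight p R • ∑ i ∈ R, v i = p • ∑ i, v i := by
  calc ∑ R, subsetWeight p R • ∑ i ∈ R, v i
      = ∑ i, (∑ R, if i ∈ R then subsetWeight p R else 0) • v i := by
        simp only [sum_smul, ite_smul, zero_smul, smul_sum]
        rw [sum_comm]
        refine sum_congr rfl fun R _ => ?_
        rw [← sum_filter]; simp
    _ = p • ∑ i, v i := by simp only [sum_subsetWeight_of_mem, smul_sum]

theorem sum_subsetWeight_mul_norm_sum_sq (p : ℝ) (v : ι → E) :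
    ∑ R, subsetWeight p R * ‖∑ i ∈ R, v i‖ ^ 2
      = p ^ 2 * ‖∑ i, v i‖ ^ 2 + (p - p ^ 2) * ∑ i, ‖v i‖ ^ 2 := by
  calc ∑ R, subsetWeight p R * ‖∑ i ∈ R, v i‖ ^ 2
      = ∑ i, ∑ j, (∑ R, if i ∈ R ∧ j ∈ R then subsetWeight p R else 0) * ⟪v i, v j⟫ := by
        have hexpand (R : Finset ι) : ‖∑ i ∈ R, v i‖ ^ 2
            = ∑ i, ∑ j, if i ∈ R ∧ j ∈ R then ⟪v i, v j⟫ else 0 := by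
          rw [norm_sum_sq_eq_sum_sum_inner, ← sum_product', ← sum_product', ← sum_filter]
          congr 1; ext; simp
        simp only [hexpand, mul_sum, sum_mul, mul_ite, ite_mul, mul_zero, zero_mul]
        rw [sum_comm]
        exact sum_congr rfl fun _ _ => sum_comm
    _ = p ^ 2 * ‖∑ i, v i‖ ^ 2 + (p - p ^ 2) * ∑ i, ‖v i‖ ^ 2 := by
        simp only [sum_subsetWeight_of_mem_of_mem, add_mul, sum_add_distrib, ite_mul, zero_mul,
          sum_ite_eq, mem_univ, if_true, real_inner_self_eq_norm_sq, norm_sum_sq_eq_sum_sum_inner,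
          mul_sum]

theorem sum_subsetWeight_mul_norm_add_sum_sq (p : ℝ) (s : E) (v : ι → E) :
    ∑ R, subsetWeight p R * ‖s + ∑ i ∈ R, v i‖ ^ 2
      = ‖s‖ ^ 2 + 2 * p * ⟪s, ∑ i, v i⟫
        + (p ^ 2 * ‖∑ i, v i‖ ^ 2 + (p - p ^ 2) * ∑ i, ‖v i‖ ^ 2) := by
  have hmean :
      ∑ R, subsetWeight p R * (2 * ⟪s, ∑ i ∈ R, v i⟫) = 2 * p * ⟪s, ∑ i, v i⟫ := by
    calc ∑ R, subsetWeight p R * (2 * ⟪s, ∑ i ∈ R, v i⟫)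
        = 2 * ⟪s, ∑ R, subsetWeight p R • ∑ i ∈ R, v i⟫ := by
          simp only [inner_sum, real_inner_smul_right, mul_sum, mul_left_comm]
      _ = 2 * p * ⟪s, ∑ i, v i⟫ := by
          rw [sum_subsetWeight_smul_sum, real_inner_smul_right, mul_assoc]
  simp only [norm_add_sq_real, mul_add, sum_add_distrib, ← sum_mul, sum_subsetWeight, one_mul,
    hmean, sum_subsetWeight_mul_norm_sum_sq]

theorem sum_subsetWeight_mul_norm_add_sum_sq_le {p : ℝ} (hp : 0 ≤ p)
    (hpι : p * Fintype.card ι ≤ 1) (s : E) (v : ι → E) :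
    ∑ R, subsetWeight p R * ‖s + ∑ i ∈ R, v i‖ ^ 2
      ≤ ‖s‖ ^ 2 + 2 * p * ⟪s, ∑ i, v i⟫ + 2 * p * ∑ i, ‖v i‖ ^ 2 := by
  have hS : 0 ≤ ∑ i, ‖v i‖ ^ 2 := sum_nonneg fun i _ => sq_nonneg _
  have hsum : p ^ 2 * ‖∑ i, v i‖ ^ 2 ≤ p * ∑ i, ‖v i‖ ^ 2 :=
    calc p ^ 2 * ‖∑ i, v i‖ ^ 2
        ≤ p ^ 2 * (Fintype.card ι * ∑ i, ‖v i‖ ^ 2) :=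
          mul_le_mul_of_nonneg_left (norm_sum_sq_le_card_mul_sum_norm_sq univ v) (sq_nonneg p)
      _ = p * (p * Fintype.card ι) * ∑ i, ‖v i‖ ^ 2 := by ring
      _ ≤ p * 1 * ∑ i, ‖v i‖ ^ 2 := by gcongr
      _ = p * ∑ i, ‖v i‖ ^ 2 := by ring
  rw [sum_subsetWeight_mul_norm_add_sum_sq]
  nlinarith [mul_nonneg (sq_nonneg p) hS]

end SubsetWeight

theorem statement11_general (n r : ℕ) (x h : Vec n r) :
    ∑ R : Finset (Fin r),
        ((1 / (r : ℝ)) ^ R.card * (1 - 1 / (r : ℝ)) ^ (r - R.card))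
          * g n r (x + restrictBlocks n r R h)
      ≤ g n r x + (1 / (r : ℝ)) * ⟪gradg n r x, h⟫ + (2 / (r : ℝ)) * ‖h‖ ^ 2 := by
  have hsum (R : Finset (Fin r)) :
      ∑ i, (x + restrictBlocks n r R h) i = ∑ i, x i + ∑ i ∈ R, h i := by
    simp [restrictBlocks, sum_add_distrib]
  have hgrad : ⟪gradg n r x, h⟫ = 2 * ⟪∑ i, x i, ∑ i, h i⟫ := by
    rw [PiLp.inner_apply, inner_sum, mul_sum]
    exact sum_congr rfl fun i _ => real_inner_smul_left _ _ _
  have hr : 1 / (r : ℝ) * Fintype.card (Fin r) ≤ 1 := by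
    rw [one_div, Fintype.card_fin]
    exact inv_mul_le_one_of_le₀ le_rfl r.cast_nonneg
  calc _ = ∑ R, subsetWeight (1 / (r : ℝ)) R * ‖∑ i, x i + ∑ i ∈ R, h i‖ ^ 2 := by
        simp only [subsetWeight, g, hsum, Fintype.card_fin]
    _ ≤ _ := sum_subsetWeight_mul_norm_add_sum_sq_le (by positivity) hr _ _
    _ = _ := by
        rw [g, hgrad, PiLp.norm_sq_eq_of_L2 _ h]
        ring

/-- The ESO inequality: if `R ⊆ {1,…,r}` is a random subset containing
each index independently with probability `1/r`, then
`𝔼[g(x + h_R)] ≤ g(x) + (1/r)⟨∇g(x), h⟩ + (2/r)‖h‖²`. -/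
theorem statement11 (n r : ℕ) (hn : 1 ≤ n) (hr : 1 ≤ r) (x h : Vec n r) :
    ∑ R : Finset (Fin r),
        ((1 / (r : ℝ)) ^ R.card * (1 - 1 / (r : ℝ)) ^ (r - R.card))
          * g n r (x + restrictBlocks n r R h)
      ≤ g n r x + (1 / (r : ℝ)) * ⟪gradg n r x, h⟫ + (2 / (r : ℝ)) * ‖h‖ ^ 2 :=
  statement11_general n r x h
end
end

section
/- Let y ∈ 𝒴, let y* be an optimal solution of (Prox-DSM) closest to y, and let g* be the optimal value of (Prox-DSM). Then g(y) ≥ g* + (1/(n²r)) ‖y − y*‖²; equivalently, ‖y − y*‖² ≤ n²r ( g(y) − g* ). -/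
open scoped RealInnerProductSpace Pointwise

noncomputable section

/-!
Put `t = ∑ᵢ y*⁽ⁱ⁾`. Every `y' ∈ 𝒴` with aggregate `∑ᵢ y'⁽ⁱ⁾ = t` is optimal, so it suffices to
find one with `‖y - y'‖ ≤ √n ‖∑ᵢ y⁽ⁱ⁾ - t‖₁`: then `‖·‖₁² ≤ n ‖·‖²` and the quadratic growth
`g(y) - g* ≥ ‖∑ᵢ y⁽ⁱ⁾ - t‖²` coming from first-order optimality give `‖y - y*‖² ≤ n² (g(y) - g*)`.

To find `y'`, minimise the `ℓ¹` defect `‖∑ᵢ z⁽ⁱ⁾ - t‖₁` over the compact set of `z ∈ 𝒴` with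
`‖z - y‖ ≤ √n (defect y - defect z)`. At a point of positive defect there is a path of exchanges
from a coordinate in excess to one in deficit, where an exchange `a → b` in block `i` is allowed
when `a` lies in every tight set of `z⁽ⁱ⁾` containing `b`. Otherwise the coordinates that reach a
deficit would form a set `W` tight in every block, and `t(W) ≤ ∑ᵢ Fᵢ(W) = ∑ᵢ z⁽ⁱ⁾(W) < t(W)`.
Pushing mass `α` along a simple such path lowers the defect by `2α` and moves `z` by at most
`2α√n`, so the minimiser has defect zero.
-/

open Finset Filter Topology

namespace ProxDSM

section Tight

variable {n : ℕ} {G : Finset (Fin n) → ℝ} {x : EuclideanSpace ℝ (Fin n)}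

def Tight (G : Finset (Fin n) → ℝ) (x : EuclideanSpace ℝ (Fin n)) (T : Finset (Fin n)) : Prop :=
  ∑ u ∈ T, x u = G T

lemma tight_empty (hG : G ∅ = 0) : Tight G x ∅ := by simp [Tight, hG]

lemma tight_univ (hx : x ∈ basePolytope n G) : Tight G x univ := hx.2

lemma Tight.inter_union (hG : Submodular G) (hx : x ∈ basePolytope n G) {A B : Finset (Fin n)}
    (hA : Tight G x A) (hB : Tight G x B) : Tight G x (A ∩ B) ∧ Tight G x (A ∪ B) := by
  have hsum : ∑ u ∈ A ∪ B, x u + ∑ u ∈ A ∩ B, x u = ∑ u ∈ A, x u + ∑ u ∈ B, x u :=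
    sum_union_inter
  have hinter := hx.1 (A ∩ B)
  have hunion := hx.1 (A ∪ B)
  have hsubmod := hG A B
  unfold Tight at *
  constructor <;> linarith

open Classical in
def minTight (G : Finset (Fin n) → ℝ) (x : EuclideanSpace ℝ (Fin n)) (b : Fin n) :
    Finset (Fin n) :=
  (univ.filter fun T => Tight G x T ∧ b ∈ T).inf id

lemma mem_minTight {a b : Fin n} :
    a ∈ minTight G x b ↔ ∀ T, Tight G x T → b ∈ T → a ∈ T := by
  classical
  simp [minTight, Finset.mem_inf]

lemma mem_minTight_self (b : Fin n) : b ∈ minTight G x b :=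
  mem_minTight.2 fun _ _ hb => hb

lemma tight_minTight (hG : Submodular G) (hx : x ∈ basePolytope n G) (b : Fin n) :
    Tight G x (minTight G x b) := by
  classical
  exact inf_induction (tight_univ hx) (fun _ h₁ _ h₂ => (h₁.inter_union hG hx h₂).1)
    fun T hT => (mem_filter.1 hT).2.1

end Tight

theorem exists_nodup_isChain_of_reflTransGen {α : Type*} {R : α → α → Prop} {a b : α}
    (h : Relation.ReflTransGen R a b) :
    ∃ l : List α, (a :: l).IsChain R ∧ (a :: l).Nodup ∧
      (a :: l).getLast (List.cons_ne_nil a l) = b := by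
  induction h using Relation.ReflTransGen.head_induction_on with
  | refl => exact ⟨[], by simp, by simp, rfl⟩
  | @head a c hac _ ih =>
    obtain ⟨l, hch, hnd, hlast⟩ := ih
    by_cases ha : a ∈ c :: l
    · obtain ⟨s, t, hst⟩ := List.mem_iff_append.1 ha
      have hsuf : (a :: t) <:+ (c :: l) := hst ▸ List.suffix_append s (a :: t)
      refine ⟨t, hch.suffix hsuf, hnd.sublist hsuf.sublist, ?_⟩
      rw [← hlast]
      simp only [hst]
      exact (List.getLast_append_of_ne_nil _ _).symm
    · exact ⟨c :: l, hch.cons (by simpa using hac), List.nodup_cons.2 ⟨ha, hnd⟩,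
        by simpa using hlast⟩

section Direction

variable {n : ℕ} {G : Finset (Fin n) → ℝ} {x : EuclideanSpace ℝ (Fin n)}

/-- The tangent cone of `B(G)` at `x`. -/
def IsFeasibleDir (G : Finset (Fin n) → ℝ) (x d : EuclideanSpace ℝ (Fin n)) : Prop :=
  ∑ u, d u = 0 ∧ ∀ T, Tight G x T → ∑ u ∈ T, d u ≤ 0

lemma isFeasibleDir_zero : IsFeasibleDir G x 0 := by simp [IsFeasibleDir]

lemma IsFeasibleDir.add {d d' : EuclideanSpace ℝ (Fin n)} (hd : IsFeasibleDir G x d)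
    (hd' : IsFeasibleDir G x d') : IsFeasibleDir G x (d + d') :=
  ⟨by simp [sum_add_distrib, hd.1, hd'.1], fun T hT => by
    simpa [sum_add_distrib] using add_nonpos (hd.2 T hT) (hd'.2 T hT)⟩

lemma isFeasibleDir_single_sub_single {a b : Fin n} (hab : a ∈ minTight G x b) :
    IsFeasibleDir G x (EuclideanSpace.single b 1 - EuclideanSpace.single a 1) := by
  refine ⟨by simp, fun T hT => ?_⟩
  have := mem_minTight.1 hab T hT
  simp only [PiLp.sub_apply, PiLp.single_apply, sum_sub_distrib, sum_ite_eq']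
  split_ifs <;> simp_all

lemma IsFeasibleDir.eventually_add_smul_mem (hx : x ∈ basePolytope n G)
    {d : EuclideanSpace ℝ (Fin n)} (hd : IsFeasibleDir G x d) :
    ∀ᶠ α in 𝓝[>] (0 : ℝ), x + α • d ∈ basePolytope n G := by
  have hsum : ∀ (α : ℝ) T, ∑ u ∈ T, (x + α • d) u = ∑ u ∈ T, x u + α * ∑ u ∈ T, d u := by
    simp [sum_add_distrib, mul_sum]
  have hle : ∀ T, ∀ᶠ α in 𝓝[>] (0 : ℝ), ∑ u ∈ T, (x + α • d) u ≤ G T := by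
    intro T
    simp only [hsum]
    by_cases htight : Tight G x T
    · filter_upwards [self_mem_nhdsWithin] with α hα
      rw [htight]
      nlinarith [hd.2 T htight, hα.out]
    · have hlt : ∑ u ∈ T, x u + 0 * ∑ u ∈ T, d u < G T := by
        simpa using lt_of_le_of_ne (hx.1 T) htight
      have hcont : Continuous fun α : ℝ => ∑ u ∈ T, x u + α * ∑ u ∈ T, d u := by fun_prop
      filter_upwards [nhdsWithin_le_nhds
        (hcont.continuousAt.eventually_lt continuousAt_const hlt)] with α hα
      exact hα.le
  filter_upwards [eventually_all.2 hle] with α hα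
  exact ⟨hα, (hsum α univ).trans (by rw [hd.1, mul_zero, add_zero]; exact hx.2)⟩

end Direction

section Exchange

variable {n r : ℕ} {F : Fin r → Finset (Fin n) → ℝ}

/-- Mass can be shifted from `a` to `b` inside some block without leaving `𝒴`. -/
def Exchange (F : Fin r → Finset (Fin n) → ℝ) (z : Vec n r) (a b : Fin n) : Prop :=
  ∃ i, a ∈ minTight (F i) (z i) b

lemma eventually_add_smul_mem_feas {z N : Vec n r} (hz : z ∈ feas n r F)
    (hN : ∀ j, IsFeasibleDir (F j) (z j) (N j)) :
    ∀ᶠ α in 𝓝[>] (0 : ℝ), z + α • N ∈ feas n r F :=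
  eventually_all.2 fun j => (hN j).eventually_add_smul_mem (hz j)

lemma sum_abs_single_add_le (i : Fin r) (d : EuclideanSpace ℝ (Fin n)) (N : Vec n r)
    (q : Fin n) : ∑ j, |(PiLp.single 2 i d + N : Vec n r) j q| ≤ |d q| + ∑ j, |N j q| := by
  have hsingle : ∀ j, (PiLp.single 2 i d : Vec n r) j q = if j = i then d q else 0 := by
    intro j
    by_cases h : j = i
    · subst h; simp
    · simp [h]
  have hd : ∑ j, |(PiLp.single 2 i d : Vec n r) j q| = |d q| := by
    simp only [hsingle, apply_ite, abs_zero, sum_ite_eq', mem_univ, if_true]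
  rw [← hd, ← sum_add_distrib]
  exact sum_le_sum fun j _ => abs_add_le _ _

theorem exists_move_along_chain (z : Vec n r) : ∀ (v : Fin n) (l : List (Fin n)),
    (v :: l).IsChain (Exchange F z) → (v :: l).Nodup → ∃ N : Vec n r,
      (∀ j, IsFeasibleDir (F j) (z j) (N j)) ∧
      ∑ j, N j
        = EuclideanSpace.single ((v :: l).getLast (List.cons_ne_nil v l)) 1
          - EuclideanSpace.single v 1 ∧
      -- `v` is the tail of one arc, every later vertex the head of one and the tail of at most one
      ∀ q, ∑ j, |N j q| ≤ if q = v then 1 else if q ∈ l then 2 else 0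
  | v, [], _, _ => ⟨0, fun _ => isFeasibleDir_zero, by simp, fun q => by split_ifs <;> simp⟩
  | v, b :: l, hch, hnd => by
    obtain ⟨⟨i, hvb⟩, hch'⟩ := List.isChain_cons_cons.1 hch
    obtain ⟨hv, hnd'⟩ := List.nodup_cons.1 hnd
    obtain ⟨N, hN, hsum, hmass⟩ := exists_move_along_chain z b l hch' hnd'
    refine ⟨PiLp.single 2 i (EuclideanSpace.single b 1 - EuclideanSpace.single v 1) + N,
      fun j => ?_, ?_, fun q => ?_⟩
    · by_cases hji : j = i
      · subst hji
        simpa using (isFeasibleDir_single_sub_single hvb).add (hN j)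
      · simpa [hji] using hN j
    · simp only [PiLp.add_apply, sum_add_distrib, hsum, PiLp.ofLp_single, sum_pi_single',
        mem_univ, if_true]
      abel
    · refine (sum_abs_single_add_le i _ N q).trans ?_
      obtain ⟨hvb', hvl⟩ : v ≠ b ∧ v ∉ l := by simpa using hv
      have hNq := hmass q
      simp only [PiLp.sub_apply, PiLp.single_apply]
      split_ifs at hNq ⊢ <;> simp_all
      linarith

end Exchange

section Aggregate

variable {n r : ℕ} {F : Fin r → Finset (Fin n) → ℝ}

lemma sum_mem_basePolytope {z : Vec n r} (hz : z ∈ feas n r F) :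
    ∑ i, z i ∈ basePolytope n (fun T => ∑ i, F i T) := by
  refine ⟨fun T => ?_, ?_⟩
  · simp only [WithLp.ofLp_sum, Finset.sum_apply]
    rw [sum_comm]
    exact sum_le_sum fun i _ => (hz i).1 T
  · simp only [WithLp.ofLp_sum, Finset.sum_apply]
    rw [sum_comm]
    exact sum_congr rfl fun i _ => (hz i).2

theorem exists_exchange_path (hsub : ∀ i, Submodular (F i)) (hnorm : ∀ i, F i ∅ = 0)
    {z : Vec n r} (hz : z ∈ feas n r F) {t : EuclideanSpace ℝ (Fin n)}
    (ht : t ∈ basePolytope n (fun T => ∑ i, F i T)) {u₀ : Fin n} (hu₀ : (∑ i, z i) u₀ < t u₀) :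
    ∃ v w, t v < (∑ i, z i) v ∧ (∑ i, z i) w < t w ∧
      Relation.ReflTransGen (Exchange F z) v w := by
  classical
  by_contra! hcon
  let W := univ.filter fun v =>
    ∃ w, Relation.ReflTransGen (Exchange F z) v w ∧ (∑ i, z i) w < t w
  have hW : ∀ v ∈ W, (∑ i, z i) v ≤ t v := fun v hv => by
    obtain ⟨w, hvw, hw⟩ := (mem_filter.1 hv).2
    by_contra! h
    exact hcon v w h hw hvw
  have hu₀W : u₀ ∈ W := mem_filter.2 ⟨mem_univ _, u₀, .refl, hu₀⟩
  -- `W` is closed under taking `minTight` in every block, hence a union of tight sets.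
  have htight : ∀ i, Tight (F i) (z i) W := fun i => by
    have hsup : W.sup (minTight (F i) (z i)) = W := by
      ext a
      simp only [Finset.mem_sup]
      refine ⟨fun ⟨u, hu, ha⟩ => ?_, fun ha => ⟨a, ha, mem_minTight_self a⟩⟩
      obtain ⟨w, huw, hw⟩ := (mem_filter.1 hu).2
      exact mem_filter.2 ⟨mem_univ _, w, .head ⟨i, ha⟩ huw, hw⟩
    rw [← hsup]
    exact sup_induction (tight_empty (hnorm i))
      (fun _ h₁ _ h₂ => (h₁.inter_union (hsub i) (hz i) h₂).2)
      fun u _ => tight_minTight (hsub i) (hz i) u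
  have hsumW : ∑ u ∈ W, (∑ i, z i) u = ∑ i, F i W := by
    simp only [WithLp.ofLp_sum, Finset.sum_apply]
    rw [sum_comm]
    exact sum_congr rfl fun i _ => htight i
  have := sum_lt_sum hW ⟨u₀, hu₀W, hu₀⟩
  have := ht.1 W
  linarith

end Aggregate

section Defect

variable {n r : ℕ} {F : Fin r → Finset (Fin n) → ℝ}

def defect (t : EuclideanSpace ℝ (Fin n)) (z : Vec n r) : ℝ := ∑ u, |(∑ i, z i - t) u|

lemma defect_nonneg (t : EuclideanSpace ℝ (Fin n)) (z : Vec n r) : 0 ≤ defect t z :=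
  sum_nonneg fun _ _ => abs_nonneg _

lemma continuous_defect (t : EuclideanSpace ℝ (Fin n)) : Continuous (defect (r := r) t) := by
  unfold defect
  fun_prop

lemma sum_eq_of_defect_eq_zero {t : EuclideanSpace ℝ (Fin n)} {z : Vec n r}
    (h : defect t z = 0) : ∑ i, z i = t := by
  ext u
  simpa [sub_eq_zero] using
    (sum_eq_zero_iff_of_nonneg fun _ _ => abs_nonneg _).1 h u (mem_univ u)

lemma exists_lt_of_sum_eq {x t : EuclideanSpace ℝ (Fin n)} (hsum : ∑ u, x u = ∑ u, t u)
    (hpos : 0 < ∑ u, |(x - t) u|) : ∃ u, x u < t u := by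
  by_contra! h
  have hxt := (sum_eq_sum_iff_of_le fun u _ => h u).1 hsum.symm
  simp [hxt] at hpos

lemma sum_abs_add_smul_single_sub_single {d : EuclideanSpace ℝ (Fin n)} {v w : Fin n}
    (hvw : v ≠ w) {α : ℝ} (hv : α ≤ d v) (hw : α ≤ -d w) (hα : 0 ≤ α) :
    ∑ u, |(d + α • (EuclideanSpace.single w 1 - EuclideanSpace.single v 1) :
      EuclideanSpace ℝ (Fin n)) u| = ∑ u, |d u| - 2 * α := by
  simp only [PiLp.add_apply, PiLp.smul_apply, PiLp.sub_apply, PiLp.single_apply, smul_eq_mul]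
  have hpt : ∀ u, |d u + α * ((if u = w then 1 else 0) - (if u = v then 1 else 0))|
      = |d u| - α * ((if u = w then 1 else 0) + (if u = v then 1 else 0)) := by
    intro u
    by_cases huw : u = w
    · subst huw
      simp only [Ne.symm hvw, if_true, if_false]
      rw [abs_of_nonpos (by linarith), abs_of_nonpos (by linarith)]
      ring
    · by_cases huv : u = v
      · subst huv
        simp only [huw, if_true, if_false]
        rw [abs_of_nonneg (by linarith), abs_of_nonneg (by linarith)]
        ring
      · simp [huw, huv]
  simp only [hpt, sum_sub_distrib, ← mul_sum, sum_add_distrib, sum_ite_eq', mem_univ, if_true]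
  ring

lemma norm_le_of_sum_abs_le {N : Vec n r} (h : ∀ q, ∑ j, |N j q| ≤ 2) : ‖N‖ ≤ 2 * √n := by
  have hsq : ‖N‖ ^ 2 ≤ 4 * n := by
    calc ‖N‖ ^ 2 = ∑ q, ∑ j, |N j q| ^ 2 := by
          simp only [PiLp.norm_sq_eq_of_L2, Real.norm_eq_abs]
          exact sum_comm
      _ ≤ ∑ q, (∑ j, |N j q|) ^ 2 :=
          sum_le_sum fun q _ => sum_sq_le_sq_sum_of_nonneg fun _ _ => abs_nonneg _
      _ ≤ ∑ _q : Fin n, (2 : ℝ) ^ 2 :=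
          sum_le_sum fun q _ => pow_le_pow_left₀ (sum_nonneg fun _ _ => abs_nonneg _) (h q) 2
      _ = 4 * n := by simp; ring
  rw [show 2 * √n = √(4 * n) by rw [Real.sqrt_mul' _ (Nat.cast_nonneg n)]; norm_num]
  exact Real.le_sqrt_of_sq_le hsq

lemma sq_sum_abs_le (x : EuclideanSpace ℝ (Fin n)) : (∑ u, |x u|) ^ 2 ≤ n * ‖x‖ ^ 2 := by
  simpa [EuclideanSpace.norm_sq_eq] using
    sq_sum_le_card_mul_sum_sq (s := univ) (f := fun u => |x u|)

end Defect

section Projection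

variable {n r : ℕ} {F : Fin r → Finset (Fin n) → ℝ}

theorem exists_step (hsub : ∀ i, Submodular (F i)) (hnorm : ∀ i, F i ∅ = 0)
    {z : Vec n r} (hz : z ∈ feas n r F) {t : EuclideanSpace ℝ (Fin n)}
    (ht : t ∈ basePolytope n (fun T => ∑ i, F i T)) (hpos : 0 < defect t z) :
    ∃ z' ∈ feas n r F, defect t z' < defect t z ∧
      ‖z' - z‖ ≤ √n * (defect t z - defect t z') := by
  obtain ⟨u₀, hu₀⟩ := exists_lt_of_sum_eq ((sum_mem_basePolytope hz).2.trans ht.2.symm) hpos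
  obtain ⟨v, w, hv, hw, hvw⟩ := exists_exchange_path hsub hnorm hz ht hu₀
  obtain ⟨l, hch, hnd, rfl⟩ := exists_nodup_isChain_of_reflTransGen hvw
  obtain ⟨N, hN, hsumN, hmass⟩ := exists_move_along_chain z v l hch hnd
  have hne : v ≠ (v :: l).getLast (List.cons_ne_nil v l) := by
    intro h
    rw [← h] at hw
    linarith
  have hNnorm : ‖N‖ ≤ 2 * √n :=
    norm_le_of_sum_abs_le fun q => (hmass q).trans (by split_ifs <;> norm_num)
  obtain ⟨α, ⟨⟨hfeas, hαw⟩, hαv⟩, hα⟩ := (((eventually_add_smul_mem_feas hz hN).and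
    (nhdsWithin_le_nhds (eventually_lt_nhds (sub_pos.2 hw)))).and
    (nhdsWithin_le_nhds (eventually_lt_nhds (sub_pos.2 hv)))).and self_mem_nhdsWithin |>.exists
  have hdefect : defect t (z + α • N) = defect t z - 2 * α := by
    have hagg : ∑ i, (z + α • N) i - t = (∑ i, z i - t) + α • (∑ i, N i) := by
      simp only [PiLp.add_apply, PiLp.smul_apply, sum_add_distrib, ← smul_sum]
      abel
    rw [defect, hagg, hsumN]
    exact sum_abs_add_smul_single_sub_single hne (by rw [PiLp.sub_apply]; linarith)
      (by rw [PiLp.sub_apply]; linarith) hα.le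
  refine ⟨z + α • N, hfeas, by linarith, ?_⟩
  rw [add_sub_cancel_left, norm_smul, Real.norm_of_nonneg hα.le, hdefect]
  nlinarith

lemma isClosed_basePolytope (G : Finset (Fin n) → ℝ) : IsClosed (basePolytope n G) := by
  have h : basePolytope n G = (⋂ A, {w : EuclideanSpace ℝ (Fin n) | ∑ u ∈ A, w u ≤ G A}) ∩
      {w | ∑ u, w u = G univ} := by
    ext
    simp [basePolytope]
  rw [h]
  exact (isClosed_iInter fun A => isClosed_le (by fun_prop) continuous_const).inter
    (isClosed_eq (by fun_prop) continuous_const)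

lemma isClosed_feas : IsClosed (feas n r F) := by
  have h : feas n r F = ⋂ i, (fun z : Vec n r => z i) ⁻¹' basePolytope n (F i) := by
    ext
    simp [feas]
  rw [h]
  exact isClosed_iInter fun i => (isClosed_basePolytope (F i)).preimage (by fun_prop)

/-- A Hoffman-type error bound for `𝒴` and the aggregation map `z ↦ ∑ᵢ z⁽ⁱ⁾`. -/
theorem exists_mem_feas_sum_eq (hsub : ∀ i, Submodular (F i)) (hnorm : ∀ i, F i ∅ = 0)
    {y : Vec n r} (hy : y ∈ feas n r F) {t : EuclideanSpace ℝ (Fin n)}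
    (ht : t ∈ basePolytope n (fun T => ∑ i, F i T)) :
    ∃ y' ∈ feas n r F, ∑ i, y' i = t ∧ ‖y - y'‖ ≤ √n * defect t y := by
  set Y := feas n r F ∩ {z | ‖z - y‖ ≤ √n * (defect t y - defect t z)}
  have hYc : IsCompact Y := by
    refine Metric.isCompact_of_isClosed_isBounded
      (isClosed_feas.inter (isClosed_le (by fun_prop)
        (continuous_const.mul (continuous_const.sub (continuous_defect t)))))
      ((Metric.isBounded_closedBall (x := y) (r := √n * defect t y)).subset ?_)
    rintro z ⟨-, hz : ‖z - y‖ ≤ _⟩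
    rw [Metric.mem_closedBall, dist_eq_norm]
    nlinarith [defect_nonneg t z, Real.sqrt_nonneg n]
  obtain ⟨zbar, ⟨hzbar, hbudget : ‖zbar - y‖ ≤ _⟩, hmin⟩ :=
    hYc.exists_isMinOn ⟨y, hy, by simp⟩ (continuous_defect t).continuousOn
  have hzero : defect t zbar = 0 := by
    by_contra hne
    obtain ⟨z', hz', hlt, hstep⟩ :=
      exists_step hsub hnorm hzbar ht ((defect_nonneg t zbar).lt_of_ne' hne)
    have hz'Y : z' ∈ Y := ⟨hz', by
      have := norm_sub_le_norm_sub_add_norm_sub z' zbar y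
      show ‖z' - y‖ ≤ _
      linarith⟩
    exact (hmin hz'Y).not_gt hlt
  refine ⟨zbar, hzbar, sum_eq_of_defect_eq_zero hzero, ?_⟩
  rw [norm_sub_rev]
  simpa [hzero] using hbudget

end Projection

section Optimality

variable {n r : ℕ} {F : Fin r → Finset (Fin n) → ℝ}

lemma inner_nonneg_of_eventually_norm_le {E : Type*} [NormedAddCommGroup E]
    [InnerProductSpace ℝ E] {a d : E} (h : ∀ᶠ s in 𝓝[>] (0 : ℝ), ‖a‖ ≤ ‖a + s • d‖) :
    0 ≤ ⟪a, d⟫ := by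
  have hlim : Tendsto (fun s : ℝ => 2 * ⟪a, d⟫ + s * ‖d‖ ^ 2) (𝓝[>] 0)
      (𝓝 (2 * ⟪a, d⟫)) := by
    have hcont : Continuous fun s : ℝ => 2 * ⟪a, d⟫ + s * ‖d‖ ^ 2 := by fun_prop
    simpa using (hcont.tendsto 0).mono_left nhdsWithin_le_nhds
  have hev : ∀ᶠ s in 𝓝[>] (0 : ℝ), 0 ≤ 2 * ⟪a, d⟫ + s * ‖d‖ ^ 2 := by
    filter_upwards [h, self_mem_nhdsWithin] with s hs hs0
    rw [Set.mem_Ioi] at hs0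
    have hsq := pow_le_pow_left₀ (norm_nonneg a) hs 2
    rw [norm_add_sq_real, real_inner_smul_right, norm_smul, Real.norm_of_nonneg hs0.le] at hsq
    have : 0 ≤ s * (2 * ⟪a, d⟫ + s * ‖d‖ ^ 2) := by nlinarith
    exact nonneg_of_mul_nonneg_right this hs0
  linarith [ge_of_tendsto hlim hev]

lemma convex_basePolytope (G : Finset (Fin n) → ℝ) : Convex ℝ (basePolytope n G) := by
  intro x hx y hy a b ha hb hab
  refine ⟨fun A => ?_, ?_⟩
  · simp only [PiLp.add_apply, PiLp.smul_apply, smul_eq_mul, sum_add_distrib, ← mul_sum]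
    calc _ ≤ a * G A + b * G A := add_le_add (mul_le_mul_of_nonneg_left (hx.1 A) ha)
          (mul_le_mul_of_nonneg_left (hy.1 A) hb)
      _ = G A := by rw [← add_mul, hab, one_mul]
  · simp only [PiLp.add_apply, PiLp.smul_apply, smul_eq_mul, sum_add_distrib, ← mul_sum]
    rw [hx.2, hy.2, ← add_mul, hab, one_mul]

lemma convex_feas : Convex ℝ (feas n r F) :=
  fun _ hx _ hy _ _ ha hb hab i => convex_basePolytope (F i) (hx i) (hy i) ha hb hab

lemma IsOptimal.norm_sum_sub_sq_le {ystar y : Vec n r} (hopt : IsOptimal n r F ystar)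
    (hy : y ∈ feas n r F) : ‖∑ i, y i - ∑ i, ystar i‖ ^ 2 ≤ g n r y - g n r ystar := by
  set a := ∑ i, ystar i
  set d := ∑ i, y i - a
  have hseg : ∀ s : ℝ, ∑ i, (ystar + s • (y - ystar)) i = a + s • d := by
    intro s
    simp only [PiLp.add_apply, PiLp.smul_apply, PiLp.sub_apply, sum_add_distrib, ← smul_sum,
      sum_sub_distrib, a, d]
  have hinner : 0 ≤ ⟪a, d⟫ := by
    -- first-order optimality along the segment from `y*` to `y`
    refine inner_nonneg_of_eventually_norm_le ?_
    filter_upwards [Ioo_mem_nhdsGT one_pos] with s hs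
    have hle := hopt.2 _ (convex_feas.add_smul_sub_mem hopt.1 hy ⟨hs.1.le, hs.2.le⟩)
    rw [g, g, hseg] at hle
    exact (pow_le_pow_iff_left₀ (norm_nonneg _) (norm_nonneg _) two_ne_zero).1 hle
  have hy' : g n r y = ‖a + d‖ ^ 2 := by simp [g, d]
  rw [hy', g, norm_add_sq_real]
  linarith

theorem sq_norm_sub_le_of_isOptimal (hsub : ∀ i, Submodular (F i)) (hnorm : ∀ i, F i ∅ = 0)
    {y ystar : Vec n r} (hy : y ∈ feas n r F) (hopt : IsOptimal n r F ystar)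
    (hclosest : ∀ z : Vec n r, IsOptimal n r F z → ‖y - ystar‖ ≤ ‖y - z‖) :
    ‖y - ystar‖ ^ 2 ≤ (n : ℝ) ^ 2 * (g n r y - g n r ystar) := by
  obtain ⟨y', hy', hsum', hdist⟩ :=
    exists_mem_feas_sum_eq hsub hnorm hy (sum_mem_basePolytope hopt.1)
  have hy'opt : IsOptimal n r F y' :=
    ⟨hy', fun z hz => by simpa only [g, hsum'] using hopt.2 z hz⟩
  calc ‖y - ystar‖ ^ 2 ≤ ‖y - y'‖ ^ 2 := by gcongr; exact hclosest y' hy'opt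
    _ ≤ (√n * defect (∑ i, ystar i) y) ^ 2 := pow_le_pow_left₀ (norm_nonneg _) hdist 2
    _ = n * (∑ u, |(∑ i, y i - ∑ i, ystar i) u|) ^ 2 := by
      rw [mul_pow, Real.sq_sqrt (Nat.cast_nonneg n), defect]
    _ ≤ n * (n * ‖∑ i, y i - ∑ i, ystar i‖ ^ 2) := by gcongr; exact sq_sum_abs_le _
    _ ≤ (n : ℝ) ^ 2 * (g n r y - g n r ystar) := by
      nlinarith [IsOptimal.norm_sum_sub_sq_le hopt hy]

end Optimality

end ProxDSM

open ProxDSM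

/-- For `y ∈ 𝒴`, `y*` an optimal solution of (Prox-DSM) closest to `y`,
and `g* = g(y*)` the optimal value: `g(y) ≥ g* + (1/(n²r))‖y - y*‖²`; equivalently,
`‖y - y*‖² ≤ n²r (g(y) - g*)`. -/
theorem statement12 (n r : ℕ) (hn : 1 ≤ n) (hr : 1 ≤ r)
    (F : Fin r → Finset (Fin n) → ℝ)
    (hsub : ∀ i, Submodular (F i)) (hnorm : ∀ i, F i ∅ = 0)
    (y ystar : Vec n r) (hy : y ∈ feas n r F)
    (hopt : IsOptimal n r F ystar)
    (hclosest : ∀ z : Vec n r, IsOptimal n r F z → ‖y - ystar‖ ≤ ‖y - z‖) :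
    g n r y ≥ g n r ystar + (1 / ((n : ℝ) ^ 2 * r)) * ‖y - ystar‖ ^ 2 ∧
    ‖y - ystar‖ ^ 2 ≤ (n : ℝ) ^ 2 * r * (g n r y - g n r ystar) := by
  have hkey := sq_norm_sub_le_of_isOptimal hsub hnorm hy hopt hclosest
  have hgap : 0 ≤ g n r y - g n r ystar := sub_nonneg.2 (hopt.2 y hy)
  have hn' : (0 : ℝ) < n := by exact_mod_cast hn
  have hr' : (1 : ℝ) ≤ r := by exact_mod_cast hr
  have hsecond : ‖y - ystar‖ ^ 2 ≤ (n : ℝ) ^ 2 * r * (g n r y - g n r ystar) :=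
    hkey.trans (by nlinarith [mul_nonneg (sq_nonneg (n : ℝ)) hgap])
  refine ⟨?_, hsecond⟩
  have hdiv : 1 / ((n : ℝ) ^ 2 * r) * ‖y - ystar‖ ^ 2 ≤ g n r y - g n r ystar := by
    rw [one_div_mul_eq_div, div_le_iff₀ (by positivity)]
    linarith
  linarith
end
end
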